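/- Let A be a commutative ring with 2 invertible, B a commutative A-algebra, and C_n := B^{⊗(n+1)}/(∑_{i<j} I_{ij}²) with J̃_{ij} the images of the merge-kernels. Define Φ_n : Ω^{(n)}_{B/A} → C_n by Φ_n(ω₁ ∧̃ ⋯ ∧̃ ωₙ) = φ₁(ω₁)⋯φₙ(ωₙ), where φ_j(dy) is the class of d^{0,j}y. Then Φ_n is well-defined (multilinear and antisymmetric), and the composition Ψ_n ∘ Φ_n is the identity on Ω^{(n)}_{B/A}, where Ψ_n is induced by y₀⊗⋯⊗yₙ ↦ y₀ dy₁ ∧̃ ⋯ ∧̃ dyₙ. -/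

import Mathlib

/-!
Each `y ↦ [d^{0,j} y]` is a derivation `B → C_n`, because `I_{0j}²` dies in `C_n`, so it induces
`φ_j : Ω¹_{B/A} → C_n`. Since `d^{ij} = d^{0j} - d^{0i}` and `I_{0i}²`, `I_{0j}²`, `I_{ij}²` die in
`C_n`, we get `φ_i(ω) φ_j(ζ) = -φ_i(ζ) φ_j(ω)` for `i ≠ j`; with `2` invertible the product
`∏ φ_j(ω_j)` is therefore alternating and factors through `Λⁿ Ω¹_{B/A}`, uniquely because the
`dy₁ ∧ ⋯ ∧ dyₙ` span. For `Ψ ∘ Φ`, expand `b · ∏_j (y_j^{(j)} - y_j^{(0)})` into pure tensors: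
every term except `b ⊗ y₁ ⊗ ⋯ ⊗ yₙ` has a factor `1` in some position `≥ 1`, which `Ψ` kills
because `d1 = 0`.
-/

open scoped TensorProduct
open PiTensorProduct

variable (A B : Type) [CommRing A] [CommRing B] [Algebra A B]

abbrev Bpow (n : ℕ) : Type := ⨂[A] (_ : Fin n), B

noncomputable def rmap {m n : ℕ} (r : Fin m → Fin n) : Bpow A B m →ₐ[A] Bpow A B n :=
  PiTensorProduct.liftAlgHom
    ((MultilinearMap.mkPiAlgebra A (Fin m) (Bpow A B n)).compLinearMap
      (fun k => (PiTensorProduct.singleAlgHom (R := A) (A := fun _ : Fin n => B) (r k)).toLinearMap))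
    (by simp [← PiTensorProduct.one_def])
    (by intro x y
        simp only [MultilinearMap.compLinearMap_apply, MultilinearMap.mkPiAlgebra_apply,
          Pi.mul_apply, AlgHom.toLinearMap_apply, _root_.map_mul, Finset.prod_mul_distrib])

noncomputable def mergeN (n i j : ℕ) (hij : i < j) (hj : j ≤ n) :
    Bpow A B (n+1) →ₐ[A] Bpow A B n :=
  rmap A B (fun k => if h1 : k.val < j then ⟨k.val, by omega⟩
    else if h2 : k.val = j then ⟨i, by omega⟩
    else ⟨k.val - 1, by have := k.isLt; omega⟩)

noncomputable def Iideal (n i j : ℕ) (hij : i < j) (hj : j ≤ n) : Ideal (Bpow A B (n+1)) :=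
  RingHom.ker (mergeN A B n i j hij hj)

noncomputable def Kideal (n : ℕ) : Ideal (Bpow A B (n+1)) :=
  ⨆ (i : ℕ) (j : ℕ) (hij : i < j) (hj : j ≤ n), (Iideal A B n i j hij hj) ^ 2

abbrev Cq (n : ℕ) : Type := Bpow A B (n+1) ⧸ Kideal A B n

noncomputable def Jt (n i j : ℕ) (hij : i < j) (hj : j ≤ n) : Ideal (Cq A B n) :=
  Ideal.map (Ideal.Quotient.mk (Kideal A B n)) (Iideal A B n i j hij hj)

noncomputable def dElt (n i j : ℕ) (hi : i ≤ n) (hj : j ≤ n) (y : B) : Bpow A B (n+1) :=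
  PiTensorProduct.singleAlgHom (R := A) (A := fun _ : Fin (n+1) => B) ⟨j, by omega⟩ y
    - PiTensorProduct.singleAlgHom (R := A) (A := fun _ : Fin (n+1) => B) ⟨i, by omega⟩ y

noncomputable def insN (n j : ℕ) (hj : j ≤ n+1) : Bpow A B (n+1) →ₐ[A] Bpow A B (n+2) :=
  rmap A B (fun k => if h : k.val < j then ⟨k.val, by omega⟩
    else ⟨k.val + 1, by have := k.isLt; omega⟩)

noncomputable def eN (n : ℕ) : Bpow A B (n+1) →ₗ[A] Bpow A B (n+2) :=
  ∑ j : Fin (n+2), ((-1 : ℤ) ^ (j : ℕ)) • (insN A B n j (by omega)).toLinearMap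

noncomputable def smashG (m n N : ℕ) (h : N = m + n) (x : Bpow A B (m+1)) (y : Bpow A B (n+1)) :
    Bpow A B (N+1) :=
  rmap A B (fun k : Fin (m+1) => (⟨k.val, by have := k.isLt; omega⟩ : Fin (N+1))) x *
  rmap A B (fun k : Fin (n+1) => (⟨m + k.val, by have := k.isLt; omega⟩ : Fin (N+1))) y

/-- The wedge `dy₁ ∧ ⋯ ∧ dyₙ`-style elements of the `n`-th exterior power. -/
noncomputable def wedgeD (n : ℕ) (f : Fin n → Ω[B⁄A]) : ⋀[B]^n (Ω[B⁄A]) :=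
  ⟨ExteriorAlgebra.ιMulti B n f, ExteriorAlgebra.ιMulti_range B n (Set.mem_range_self f)⟩

/-- `B`-algebra structure on `C_n` through the 0-th tensor factor. -/
noncomputable instance instAlgebraBCq (n : ℕ) : Algebra B (Cq A B n) :=
  ((Ideal.Quotient.mk (Kideal A B n)).comp
    (PiTensorProduct.singleAlgHom (R := A) (A := fun _ : Fin (n+1) => B) 0).toRingHom).toAlgebra

open scoped Pointwise in
lemma LinearMap.ext_on_smul {R S M N : Type*} [CommSemiring R] [Semiring S] [Algebra R S]
    [AddCommMonoid M] [Module R M] [Module S M] [IsScalarTower R S M]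
    [AddCommMonoid N] [Module R N] {s : Set M} (hs : Submodule.span S s = ⊤)
    {f g : M →ₗ[R] N} (h : ∀ (b : S), ∀ x ∈ s, f (b • x) = g (b • x)) : f = g := by
  refine LinearMap.ext_on (s := (Set.univ : Set S) • s) ?_ ?_
  · rw [Submodule.span_smul_of_span_eq_top Submodule.span_univ, hs, Submodule.restrictScalars_top]
  · rintro _ ⟨b, -, x, hx, rfl⟩
    exact h b x hx

noncomputable abbrev incl (n : ℕ) (i : Fin n) : B →ₐ[A] Bpow A B n :=
  PiTensorProduct.singleAlgHom (R := A) (A := fun _ : Fin n => B) i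

lemma incl_eq_tprod (n : ℕ) (i : Fin n) (y : B) :
    incl A B n i y = PiTensorProduct.tprod A (Pi.mulSingle i y) := rfl

lemma prod_incl (n : ℕ) (x : Fin n → B) :
    ∏ i, incl A B n i (x i) = PiTensorProduct.tprod A x := by
  simp_rw [incl_eq_tprod, ← PiTensorProduct.tprodMonoidHom_apply, ← map_prod,
    Finset.univ_prod_mulSingle]

lemma incl_zero_mul_prod_incl_succ (n : ℕ) (b : B) (x : Fin n → B) :
    incl A B (n+1) 0 b * ∏ i : Fin n, incl A B (n+1) i.succ (x i)
      = PiTensorProduct.tprod A (Fin.cons b x : Fin (n+1) → B) := by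
  rw [← prod_incl, Fin.prod_univ_succ]
  simp

lemma rmap_tprod {m n : ℕ} (r : Fin m → Fin n) (x : Fin m → B) :
    rmap A B r (PiTensorProduct.tprod A x) = ∏ k, incl A B n (r k) (x k) := by
  simp [rmap, PiTensorProduct.liftAlgHom]

lemma rmap_incl {m n : ℕ} (r : Fin m → Fin n) (k : Fin m) (y : B) :
    rmap A B r (incl A B m k y) = incl A B n (r k) y := by
  rw [incl_eq_tprod, rmap_tprod, Finset.prod_eq_single k]
  · simp
  · intro k' _ hk'
    simp [Pi.mulSingle_eq_of_ne hk', ← PiTensorProduct.one_def]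
  · simp

lemma dElt_mem_Iideal (n i j : ℕ) (hij : i < j) (hj : j ≤ n) (y : B) :
    dElt A B n i j (by omega) hj y ∈ Iideal A B n i j hij hj := by
  rw [Iideal, RingHom.mem_ker, dElt, map_sub, sub_eq_zero]
  refine (rmap_incl A B _ _ y).trans (Eq.trans ?_ (rmap_incl A B _ _ y).symm)
  congr 2
  simp [hij]

lemma pow_two_Iideal_le_Kideal (n i j : ℕ) (hij : i < j) (hj : j ≤ n) :
    Iideal A B n i j hij hj ^ 2 ≤ Kideal A B n :=
  le_iSup₂_of_le i j (le_iSup₂_of_le (f := fun hij hj => Iideal A B n i j hij hj ^ 2) hij hj le_rfl)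

lemma mk_mul_eq_zero_of_mem_Iideal (n i j : ℕ) (hij : i < j) (hj : j ≤ n)
    {x y : Bpow A B (n+1)} (hx : x ∈ Iideal A B n i j hij hj) (hy : y ∈ Iideal A B n i j hij hj) :
    Ideal.Quotient.mk (Kideal A B n) (x * y) = 0 :=
  Ideal.Quotient.eq_zero_iff_mem.mpr
    (pow_two_Iideal_le_Kideal A B n i j hij hj (by rw [pow_two]; exact Ideal.mul_mem_mul hx hy))

lemma algebraMap_Cq (n : ℕ) (b : B) :
    algebraMap B (Cq A B n) b = Ideal.Quotient.mk (Kideal A B n) (incl A B (n+1) 0 b) := rfl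

instance (n : ℕ) : IsScalarTower A B (Cq A B n) :=
  IsScalarTower.of_algebraMap_eq fun a => by
    rw [algebraMap_Cq, AlgHom.commutes]
    rfl

/-- `y ↦ [d^{0,j} y]`. -/
noncomputable def dZero (n j : ℕ) (hj0 : 0 < j) (hj : j ≤ n) : Derivation A B (Cq A B n) :=
  Derivation.mk'
    ((Ideal.Quotient.mkₐ A (Kideal A B n)).toLinearMap ∘ₗ
      ((incl A B (n+1) ⟨j, by omega⟩).toLinearMap - (incl A B (n+1) ⟨0, by omega⟩).toLinearMap))
    fun a b => by
      -- `d(ab) = a·db + b·da + da·db`, and `da·db ∈ I_{0j}²`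
      have hsq := mk_mul_eq_zero_of_mem_Iideal A B n 0 j hj0 hj
        (dElt_mem_Iideal A B n 0 j hj0 hj a) (dElt_mem_Iideal A B n 0 j hj0 hj b)
      simp only [dElt, Fin.zero_eta] at hsq
      simp only [LinearMap.coe_comp, Function.comp_apply, LinearMap.sub_apply,
        AlgHom.toLinearMap_apply, Ideal.Quotient.mkₐ_eq_mk, Algebra.smul_def, algebraMap_Cq,
        Fin.zero_eta, ← map_mul, ← map_add]
      rw [← sub_eq_zero, ← map_sub, ← hsq]
      congr 1
      simp only [map_mul]
      ring

noncomputable def phi (n : ℕ) (j : Fin n) : Ω[B⁄A] →ₗ[B] Cq A B n :=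
  (dZero A B n (j.val + 1) j.val.succ_pos j.isLt).liftKaehlerDifferential

lemma phi_D (n : ℕ) (j : Fin n) (y : B) :
    phi A B n j (KaehlerDifferential.D A B y)
      = Ideal.Quotient.mk (Kideal A B n) (dElt A B n 0 (j.val+1) (Nat.zero_le n) j.isLt y) :=
  Derivation.liftKaehlerDifferential_comp_D _ y

lemma mk_dElt_mul_add_mk_dElt_mul (n i j : ℕ) (hi : 0 < i) (hij : i < j) (hj : j ≤ n) (y z : B) :
    Ideal.Quotient.mk (Kideal A B n) (dElt A B n 0 i (by omega) (by omega) y) *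
        Ideal.Quotient.mk (Kideal A B n) (dElt A B n 0 j (by omega) hj z) +
      Ideal.Quotient.mk (Kideal A B n) (dElt A B n 0 i (by omega) (by omega) z) *
        Ideal.Quotient.mk (Kideal A B n) (dElt A B n 0 j (by omega) hj y) = 0 := by
  have hpolar : dElt A B n 0 i (by omega) (by omega) y * dElt A B n 0 j (by omega) hj z
      + dElt A B n 0 i (by omega) (by omega) z * dElt A B n 0 j (by omega) hj y
      = dElt A B n 0 i (by omega) (by omega) y * dElt A B n 0 i (by omega) (by omega) z
      + dElt A B n 0 j (by omega) hj y * dElt A B n 0 j (by omega) hj z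
      - dElt A B n i j (by omega) hj y * dElt A B n i j (by omega) hj z := by
    simp only [dElt]
    ring
  have mem := dElt_mem_Iideal A B n
  rw [← map_mul, ← map_mul, ← map_add, hpolar, map_sub, map_add,
    mk_mul_eq_zero_of_mem_Iideal A B n 0 i hi (by omega) (mem 0 i hi _ y) (mem 0 i hi _ z),
    mk_mul_eq_zero_of_mem_Iideal A B n 0 j (by omega) hj (mem 0 j _ hj y) (mem 0 j _ hj z),
    mk_mul_eq_zero_of_mem_Iideal A B n i j hij hj (mem i j hij hj y) (mem i j hij hj z),
    add_zero, sub_zero]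

lemma phi_mul_phi_add_phi_mul_phi_of_lt (n : ℕ) {i j : Fin n} (hij : i < j) (ω ζ : Ω[B⁄A]) :
    phi A B n i ω * phi A B n j ζ + phi A B n i ζ * phi A B n j ω = 0 := by
  let f := (LinearMap.mul B (Cq A B n)).compl₁₂ (phi A B n i) (phi A B n j)
  suffices f + f.flip = 0 from LinearMap.congr_fun₂ this ω ζ
  have hD := KaehlerDifferential.span_range_derivation A B
  refine LinearMap.ext_on_range hD fun y => LinearMap.ext_on_range hD fun z => ?_
  simpa [f, phi_D] using mk_dElt_mul_add_mk_dElt_mul A B n (i.val + 1) (j.val + 1)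
    i.val.succ_pos (Nat.succ_lt_succ hij) j.isLt y z

lemma phi_mul_phi_self (n : ℕ) (h2 : IsUnit (2 : A)) {i j : Fin n} (hij : i ≠ j)
    (ω : Ω[B⁄A]) : phi A B n i ω * phi A B n j ω = 0 := by
  have hsum : phi A B n i ω * phi A B n j ω + phi A B n i ω * phi A B n j ω = 0 := by
    rcases hij.lt_or_gt with h | h
    · exact phi_mul_phi_add_phi_mul_phi_of_lt A B n h ω ω
    · simpa only [mul_comm] using phi_mul_phi_add_phi_mul_phi_of_lt A B n h ω ω
  rw [← two_smul A] at hsum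
  exact h2.smul_eq_zero.mp hsum

noncomputable def phiProd (n : ℕ) (h2 : IsUnit (2 : A)) : Ω[B⁄A] [⋀^Fin n]→ₗ[B] Cq A B n where
  toMultilinearMap :=
    (MultilinearMap.mkPiAlgebra B (Fin n) (Cq A B n)).compLinearMap (phi A B n)
  map_eq_zero_of_eq' v i j hv hij := by
    change ∏ k, phi A B n k (v k) = 0
    rw [← Finset.mul_prod_erase _ _ (Finset.mem_univ i),
      ← Finset.mul_prod_erase _ _ (Finset.mem_erase.mpr ⟨hij.symm, Finset.mem_univ j⟩),
      ← mul_assoc, hv, phi_mul_phi_self A B n h2 hij, zero_mul]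

noncomputable def Phi (n : ℕ) (h2 : IsUnit (2 : A)) : ⋀[B]^n (Ω[B⁄A]) →ₗ[B] Cq A B n :=
  exteriorPower.alternatingMapLinearEquiv (phiProd A B n h2)

lemma Phi_wedgeD (n : ℕ) (h2 : IsUnit (2 : A)) (v : Fin n → Ω[B⁄A]) :
    Phi A B n h2 (wedgeD A B n v) = ∏ j, phi A B n j (v j) :=
  exteriorPower.alternatingMapLinearEquiv_apply_ιMulti _ v

lemma Phi_wedgeD_D (n : ℕ) (h2 : IsUnit (2 : A)) (y : Fin n → B) :
    Phi A B n h2 (wedgeD A B n fun i => KaehlerDifferential.D A B (y i))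
      = ∏ i, Ideal.Quotient.mk (Kideal A B n)
          (dElt A B n 0 (i.val+1) (Nat.zero_le n) i.isLt (y i)) := by
  rw [Phi_wedgeD]
  exact Finset.prod_congr rfl fun j _ => phi_D A B n j (y j)

lemma span_range_wedgeD_D (n : ℕ) :
    Submodule.span B (Set.range fun y : Fin n → B =>
      wedgeD A B n fun i => KaehlerDifferential.D A B (y i)) = ⊤ := by
  rw [← exteriorPower.ιMulti_span_of_span B n (Ω[B⁄A])
    (KaehlerDifferential.span_range_derivation A B)]
  congr 1
  ext w
  constructor
  · rintro ⟨y, rfl⟩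
    exact ⟨_, Set.range_comp_subset_range _ _, rfl⟩
  · rintro ⟨v, hv, rfl⟩
    choose y hy using fun i => hv (Set.mem_range_self i)
    exact ⟨y, congrArg _ (funext hy)⟩

lemma dElt_zero_succ (n : ℕ) (j : Fin n) (y : B) :
    dElt A B n 0 (j.val+1) (Nat.zero_le n) j.isLt y
      = incl A B (n+1) j.succ y + incl A B (n+1) 0 (-y) := by
  rw [dElt, map_neg, ← sub_eq_add_neg]
  rfl

lemma map_incl_zero_mul_prod_dElt {N : Type*} [AddCommGroup N] [Module A N] (n : ℕ)
    (L : Bpow A B (n+1) →ₗ[A] N)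
    (hL : ∀ (x : Fin (n+1) → B) (j : Fin n), x j.succ = 1 → L (PiTensorProduct.tprod A x) = 0)
    (b : B) (y : Fin n → B) :
    L (incl A B (n+1) 0 b * ∏ j, dElt A B n 0 (j.val+1) (Nat.zero_le n) j.isLt (y j))
      = L (PiTensorProduct.tprod A (Fin.cons b y : Fin (n+1) → B)) := by
  classical
  simp_rw [dElt_zero_succ, Finset.prod_add, Finset.mul_sum, map_sum]
  rw [Finset.sum_eq_single_of_mem Finset.univ (Finset.mem_powerset_self _)]
  · rw [Finset.sdiff_self, Finset.prod_empty, mul_one, incl_zero_mul_prod_incl_succ]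
  · intro t _ ht
    obtain ⟨j, hj⟩ : ∃ j, j ∉ t := by simpa [Finset.eq_univ_iff_forall] using ht
    have hterm : incl A B (n+1) 0 b * ((∏ i ∈ t, incl A B (n+1) i.succ (y i)) *
          ∏ i ∈ Finset.univ \ t, incl A B (n+1) 0 (-y i))
        = PiTensorProduct.tprod A (Fin.cons (b * ∏ i ∈ Finset.univ \ t, -y i)
            (fun i => if i ∈ t then y i else 1) : Fin (n+1) → B) := by
      rw [← incl_zero_mul_prod_incl_succ]
      simp only [apply_ite, map_one, Finset.prod_ite_mem, Finset.univ_inter, map_prod, map_mul]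
      ring
    rw [hterm]
    exact hL _ j (by simp [hj])

lemma map_smul_prod_mk_dElt (n : ℕ) (Ψ : Cq A B n →ₗ[A] ⋀[B]^n (Ω[B⁄A]))
    (hΨ : ∀ y : Fin (n+1) → B,
      Ψ (Ideal.Quotient.mk (Kideal A B n) (PiTensorProduct.tprod A y))
        = y 0 • wedgeD A B n (fun i => KaehlerDifferential.D A B (y i.succ)))
    (b : B) (y : Fin n → B) :
    Ψ (b • ∏ i, Ideal.Quotient.mk (Kideal A B n)
        (dElt A B n 0 (i.val+1) (Nat.zero_le n) i.isLt (y i)))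
      = b • wedgeD A B n (fun i => KaehlerDifferential.D A B (y i)) := by
  have hL : ∀ (x : Fin (n+1) → B) (j : Fin n), x j.succ = 1 →
      (Ψ ∘ₗ (Ideal.Quotient.mkₐ A (Kideal A B n)).toLinearMap) (PiTensorProduct.tprod A x) = 0 := by
    intro x j hx
    change Ψ (Ideal.Quotient.mk _ _) = 0
    rw [hΨ, show wedgeD A B n _ = exteriorPower.ιMulti B n _ from rfl,
      AlternatingMap.map_coord_zero _ j (by rw [hx, Derivation.map_one_eq_zero]), smul_zero]
  rw [Algebra.smul_def, algebraMap_Cq, ← map_prod, ← map_mul]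
  refine (map_incl_zero_mul_prod_dElt A B n _ hL b y).trans ?_
  exact hΨ _

/-- (2 invertible in `A`.)  The map `Φₙ : Λⁿ Ω¹_{B/A} → Cₙ` with
`Φₙ(dy₁ ∧ ⋯ ∧ dyₙ) = ∏ⱼ [d^{0,j} yⱼ]` is well defined (i.e. exists, `B`-linearly, and is
unique), and `Ψₙ ∘ Φₙ = id` on `Λⁿ Ω¹_{B/A}`. -/
theorem statement11 (n : ℕ) (h2 : IsUnit (2 : A))
    (Ψ : Cq A B (n) →ₗ[A] ⋀[B]^(n) (Ω[B⁄A]))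
    (hΨ : ∀ y : Fin (n+1) → B,
      Ψ (Ideal.Quotient.mk (Kideal A B (n)) (PiTensorProduct.tprod A y))
        = y 0 • wedgeD A B (n) (fun i => KaehlerDifferential.D A B (y i.succ))) :
    (∃! Φ : (⋀[B]^n (Ω[B⁄A])) →ₗ[B] Cq A B n,
      ∀ y : Fin n → B,
        Φ (wedgeD A B n (fun i => KaehlerDifferential.D A B (y i)))
          = ∏ i : Fin n, Ideal.Quotient.mk (Kideal A B n)
              (dElt A B n 0 (i.val+1) (by omega) (by have := i.isLt; omega) (y i))) ∧
    (∀ Φ : (⋀[B]^n (Ω[B⁄A])) →ₗ[B] Cq A B n,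
      (∀ y : Fin n → B,
        Φ (wedgeD A B n (fun i => KaehlerDifferential.D A B (y i)))
          = ∏ i : Fin n, Ideal.Quotient.mk (Kideal A B n)
              (dElt A B n 0 (i.val+1) (by omega) (by have := i.isLt; omega) (y i))) →
      ∀ ω : ⋀[B]^n (Ω[B⁄A]), Ψ (Φ ω) = ω) := by
  refine ⟨⟨Phi A B n h2, Phi_wedgeD_D A B n h2, fun Φ hΦ => ?_⟩, fun Φ hΦ => ?_⟩
  · refine LinearMap.ext_on_range (span_range_wedgeD_D A B n) fun y => ?_
    rw [hΦ, Phi_wedgeD_D]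
  · have hΨΦ : Ψ ∘ₗ Φ.restrictScalars A = LinearMap.id := by
      refine LinearMap.ext_on_smul (span_range_wedgeD_D A B n) ?_
      rintro b _ ⟨y, rfl⟩
      simpa [hΦ] using map_smul_prod_mk_dElt A B n Ψ hΨ b y
    exact LinearMap.congr_fun hΨΦ
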